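/- A permutation π of length n ≥ 1 avoids the mesh pattern (12, {(0,1),(1,1),(2,0),(2,2)}) if and only if π(n) = 1, i.e. π ends with 1. Therefore the number of permutations of length n avoiding this pattern is (n−1)!. -/

import Mathlib

/-- 1-based position boundaries of an occurrence: `posOf x 0 = 0`,
`posOf x i = x_i` (1-based) for `1 ≤ i ≤ k`, and `posOf x i = n+1` for `i > k`. -/
def posOf {k n : ℕ} (x : Fin k → Fin n) (i : ℕ) : ℕ :=
  if h : 1 ≤ i ∧ i ≤ k then (x ⟨i - 1, by omega⟩ : ℕ) + 1
  else if i = 0 then 0 else n + 1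

/-- 1-based value boundaries of an occurrence: `valOf τ x π 0 = 0`,
`valOf τ x π j = y_j`, the `j`-th smallest of the values `π(x_1),…,π(x_k)`
(which equals `π(x_{τ⁻¹(j)})` for an occurrence of the classical pattern `τ`),
and `n+1` for `j > k`. -/
def valOf {k n : ℕ} (τ : Equiv.Perm (Fin k)) (x : Fin k → Fin n)
    (π : Equiv.Perm (Fin n)) (j : ℕ) : ℕ :=
  if h : 1 ≤ j ∧ j ≤ k then (π (x (τ.symm ⟨j - 1, by omega⟩)) : ℕ) + 1
  else if j = 0 then 0 else n + 1

/-- `π` (a permutation of length `n`, 0-indexed via `Fin n`) contains the mesh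
pattern `(τ, R)`, where boxes in `R` are given with 0-based coordinates in `[0,k]²`.
All positions/values are converted to 1-based via `+1`. -/
def MeshOccursIn {k n : ℕ} (τ : Equiv.Perm (Fin k)) (R : Set (ℕ × ℕ))
    (π : Equiv.Perm (Fin n)) : Prop :=
  ∃ x : Fin k → Fin n, StrictMono x ∧
    (∀ a b : Fin k, π (x a) < π (x b) ↔ τ a < τ b) ∧
    ∀ r ∈ R, ∀ z : Fin n,
      ¬ (posOf x r.1 < (z : ℕ) + 1 ∧ (z : ℕ) + 1 < posOf x (r.1 + 1) ∧
         valOf τ x π r.2 < (π z : ℕ) + 1 ∧ (π z : ℕ) + 1 < valOf τ x π (r.2 + 1))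

/-- `π` avoids the mesh pattern `(τ, R)`. -/
def MeshAvoids {k n : ℕ} (τ : Equiv.Perm (Fin k)) (R : Set (ℕ × ℕ))
    (π : Equiv.Perm (Fin n)) : Prop := ¬ MeshOccursIn τ R π

/-!
If `π(n) ≠ 1`, the entries with values `π(n) - 1` and `π(n)` form an occurrence of `12` ending
at the last position: nothing lies to the right of it, and no value lies strictly between the two,
so all four shaded boxes are empty. If `π(n) = 1`, then in any occurrence of `12` the larger entry is not the
last one, so the final entry `1` lies in the shaded box `(2,0)`. Permutations with a prescribed
value at a prescribed position are counted by `(n-1)!`.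
-/

open Equiv

theorem Equiv.Perm.card_apply_eq {α : Type*} [Fintype α] [DecidableEq α] (a b : α) :
    Nat.card {σ : Perm α // σ a = b} = (Fintype.card α - 1).factorial := by
  have moveTarget : {σ : Perm α // σ a = b} ≃ {σ : Perm α // σ a = a} :=
    (Equiv.mulLeft (swap a b)).subtypeEquiv fun σ => by simp [swap_apply_eq_iff]
  have stabilizerEquiv : {σ : Perm α // σ a = a} ≃ Perm {x // x ≠ a} :=
    ((Perm.subtypeEquivSubtypePerm (· ≠ a)).trans
      (Equiv.subtypeEquivRight fun σ => by simp)).symm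
  rw [Nat.card_congr (moveTarget.trans stabilizerEquiv), Nat.card_perm]
  simp

theorem meshOccursIn_of_last_ne_zero {m : ℕ} (π : Perm (Fin (m + 1))) (h : π (Fin.last m) ≠ 0) :
    MeshOccursIn (1 : Perm (Fin 2)) {(0,1),(1,1),(2,0),(2,2)} π := by
  have hpos : 0 < (π (Fin.last m) : ℕ) := Fin.pos_iff_ne_zero.mpr h
  obtain ⟨i, hπi⟩ : ∃ i, (π i : ℕ) = π (Fin.last m) - 1 :=
    ⟨π.symm ⟨π (Fin.last m) - 1, by omega⟩, by simp⟩
  have hi : i < Fin.last m := by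
    refine lt_of_le_of_ne (Fin.le_last i) fun hil => ?_
    rw [hil] at hπi
    omega
  have hπ : π i < π (Fin.last m) := by rw [Fin.lt_def]; omega
  refine ⟨![i, Fin.last m], Fin.strictMono_iff_lt_succ.mpr (by simpa using hi), ?_, ?_⟩
  · intro a b
    fin_cases a <;> fin_cases b <;> simp [hπ, hπ.asymm]
  · simp only [Set.mem_insert_iff, Set.mem_singleton_iff]
    rintro r (rfl | rfl | rfl | rfl) z <;> simp [posOf, valOf, pull_end, hπi] <;> omega

theorem not_meshOccursIn_of_last_eq_zero {m : ℕ} (π : Perm (Fin (m + 1)))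
    (h : π (Fin.last m) = 0) :
    ¬ MeshOccursIn (1 : Perm (Fin 2)) {(0,1),(1,1),(2,0),(2,2)} π := by
  rintro ⟨x, hmono, hval, hbox⟩
  have hx : x 0 < x 1 := hmono (by decide)
  have hπx : π (x 0) < π (x 1) := (hval 0 1).mpr (by decide)
  have hx1 : x 1 < Fin.last m := by
    refine lt_of_le_of_ne (Fin.le_last _) fun hx1 => ?_
    rw [hx1, h] at hπx
    exact Fin.not_lt_zero _ hπx
  have hπx0 : 0 < π (x 0) := by
    refine Fin.pos_iff_ne_zero.mpr fun h0 => ?_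
    have : x 0 = Fin.last m := π.injective (h0.trans h.symm)
    exact (hx.trans hx1).ne this
  apply hbox (2, 0) (by simp) (Fin.last m)
  simpa [posOf, valOf, pull_end, h, hπx0, Fin.lt_def] using hx1

theorem meshAvoids_iff_last_eq_zero {m : ℕ} (π : Perm (Fin (m + 1))) :
    MeshAvoids (1 : Perm (Fin 2)) {(0,1),(1,1),(2,0),(2,2)} π ↔ π (Fin.last m) = 0 :=
  ⟨fun h => by_contra fun hne => h (meshOccursIn_of_last_ne_zero π hne),
    not_meshOccursIn_of_last_eq_zero π⟩

/-- A permutation of length `n ≥ 1` avoids `(12, {(0,1),(1,1),(2,0),(2,2)})` iff it ends with `1`; hence `(n-1)!` avoiders. -/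
theorem stmt3 (n : ℕ) (hn : 1 ≤ n) :
    (∀ π : Equiv.Perm (Fin n),
      MeshAvoids (1 : Equiv.Perm (Fin 2)) {(0,1),(1,1),(2,0),(2,2)} π ↔ π ⟨n - 1, by omega⟩ = ⟨0, by omega⟩) ∧
    Nat.card {π : Equiv.Perm (Fin n) //
      MeshAvoids (1 : Equiv.Perm (Fin 2)) {(0,1),(1,1),(2,0),(2,2)} π} = (n - 1).factorial := by
  obtain ⟨m, rfl⟩ : ∃ m, n = m + 1 := ⟨n - 1, by omega⟩
  have hkey := meshAvoids_iff_last_eq_zero (m := m)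
  refine ⟨hkey, ?_⟩
  rw [Nat.card_congr (Equiv.subtypeEquivRight hkey), Perm.card_apply_eq, Fintype.card_fin]
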